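/- arXiv:math/0404449 — 4 statements merged into one kernel-verified Lean document; each statement's English description precedes it below -/
import Mathlib

section
/- Twisted injectivity for Morita equivalences: let P be a Morita equivalence between 𝒢 and ℋ with division maps φ^R, φ^L, let U_α, U_β ⊆ X_𝒢 with sections σ_α : U_α → P, σ_β : U_β → P of π, ε_α := ε ∘ σ_α, ε_β := ε ∘ σ_β, and Θ_{βα}(g) := φ^R(σ_β(t g), g·σ_α(s g)) for arrows g with s(g) ∈ U_α and t(g) ∈ U_β. Then for arrows g₁, g₂ with s(g₁), s(g₂) ∈ U_α and t(g₁), t(g₂) ∈ U_β: (i) if Θ_{βα}(g₁) = Θ_{βα}(g₂), then ε_β(t g₁) = ε_β(t g₂), ε_α(s g₁) = ε_α(s g₂), and φ^L(σ_β(t g₂), σ_β(t g₁))·g₁ = g₂·φ^L(σ_α(s g₂), σ_α(s g₁)); (ii) conversely, if ε_β(t g₁) = ε_β(t g₂), ε_α(s g₁) = ε_α(s g₂) and φ^L(σ_β(t g₂), σ_β(t g₁))·g₁ = g₂·φ^L(σ_α(s g₂), σ_α(s g₁)), then Θ_{βα}(g₁) = Θ_{βα}(g₂). -/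
/-- An algebraic groupoid: arrows `G`, objects `X`, source/target maps, units,
inverses, and a multiplication that is "defined" (i.e. satisfies the groupoid
laws) exactly when the source of the first arrow equals the target of the
second. -/
structure AlgGroupoid (G : Type*) (X : Type*) where
  s : G → X
  t : G → X
  ι : X → G
  inv : G → G
  mul : G → G → G
  t_mul : ∀ g₁ g₂, s g₁ = t g₂ → t (mul g₁ g₂) = t g₁
  s_mul : ∀ g₁ g₂, s g₁ = t g₂ → s (mul g₁ g₂) = s g₂
  t_unit : ∀ x, t (ι x) = x
  s_unit : ∀ x, s (ι x) = x
  unit_mul : ∀ g, mul (ι (t g)) g = g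
  mul_unit : ∀ g, mul g (ι (s g)) = g
  s_inv : ∀ g, s (inv g) = t g
  t_inv : ∀ g, t (inv g) = s g
  mul_inv : ∀ g, mul g (inv g) = ι (t g)
  inv_mul : ∀ g, mul (inv g) g = ι (s g)
  mul_assoc : ∀ g₁ g₂ g₃, s g₁ = t g₂ → s g₂ = t g₃ →
    mul (mul g₁ g₂) g₃ = mul g₁ (mul g₂ g₃)

/-- A right principal `𝒢`-bundle over a set `M`: a surjection `π : P → M`, a
momentum `ε : P → X`, and a right action `act p g` whose laws hold exactly when
`𝒢.t g = ε p`; the action is free and transitive on the fibers of `π`. -/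
structure IsPrincipalBundle {G X P M : Type*} (𝒢 : AlgGroupoid G X)
    (π : P → M) (ε : P → X) (act : P → G → P) : Prop where
  π_surj : Function.Surjective π
  ε_act : ∀ p g, 𝒢.t g = ε p → ε (act p g) = 𝒢.s g
  π_act : ∀ p g, 𝒢.t g = ε p → π (act p g) = π p
  act_unit : ∀ p, act p (𝒢.ι (ε p)) = p
  act_mul : ∀ p g g', 𝒢.t g = ε p → 𝒢.s g = 𝒢.t g' →
    act (act p g) g' = act p (𝒢.mul g g')
  free : ∀ p g, 𝒢.t g = ε p → act p g = p → g = 𝒢.ι (ε p)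
  trans : ∀ p q, π p = π q → ∃ g, 𝒢.t g = ε p ∧ act p g = q

/-- The (right) division map of a right principal bundle: the unique map with
`q = p · φ p q` whenever `π p = π q`. -/
def IsDivisionMap {G X P M : Type*} (𝒢 : AlgGroupoid G X)
    (π : P → M) (ε : P → X) (act : P → G → P) (φ : P → P → G) : Prop :=
  ∀ p q, π p = π q → 𝒢.t (φ p q) = ε p ∧ act p (φ p q) = q

/-- A generalized morphism from `𝒢` to `ℋ`: a right principal `ℋ`-bundle over
`X_𝒢` together with a compatible left `𝒢`-action along `π`. -/
structure IsGeneralizedMorphism {G XG H XH P : Type*}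
    (𝒢 : AlgGroupoid G XG) (ℋ : AlgGroupoid H XH)
    (π : P → XG) (ε : P → XH) (act : P → H → P) (lact : G → P → P) : Prop where
  principal : IsPrincipalBundle ℋ π ε act
  π_lact : ∀ g p, 𝒢.s g = π p → π (lact g p) = 𝒢.t g
  lact_unit : ∀ p, lact (𝒢.ι (π p)) p = p
  lact_mul : ∀ g g' p, 𝒢.s g' = π p → 𝒢.s g = 𝒢.t g' →
    lact g (lact g' p) = lact (𝒢.mul g g') p
  ε_lact : ∀ g p, 𝒢.s g = π p → ε (lact g p) = ε p
  compat : ∀ g p h, 𝒢.s g = π p → ℋ.t h = ε p →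
    act (lact g p) h = lact g (act p h)

/-- A Morita equivalence: a generalized morphism whose momentum `ε` is
surjective and whose left `𝒢`-action is free and transitive on the fibers
of `ε`. -/
structure IsMoritaEquivalence {G XG H XH P : Type*}
    (𝒢 : AlgGroupoid G XG) (ℋ : AlgGroupoid H XH)
    (π : P → XG) (ε : P → XH) (act : P → H → P) (lact : G → P → P) : Prop where
  toGenMorphism : IsGeneralizedMorphism 𝒢 ℋ π ε act lact
  ε_surj : Function.Surjective ε
  lfree : ∀ g p, 𝒢.s g = π p → lact g p = p → g = 𝒢.ι (π p)
  ltrans : ∀ p q, ε p = ε q → ∃ g, 𝒢.s g = π q ∧ lact g q = p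

/-- The left division map of a Morita equivalence: the unique map with
`p = φL p q · q` whenever `ε p = ε q`; it satisfies `t (φL p q) = π p` and
`s (φL p q) = π q`. -/
def IsLeftDivisionMap {G XG XH P : Type*} (𝒢 : AlgGroupoid G XG)
    (π : P → XG) (ε : P → XH) (lact : G → P → P) (φL : P → P → G) : Prop :=
  ∀ p q, ε p = ε q →
    𝒢.t (φL p q) = π p ∧ 𝒢.s (φL p q) = π q ∧ lact (φL p q) q = p

/-- The local cocycle `Θ_{βα}` of a generalized morphism w.r.t. sections `σt`
(over the target chart) and `σs` (over the source chart):
`Θ(g) = φ_P (σt (t g)) (g · σs (s g))`. -/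
def Theta2 {G XG H P : Type*} (𝒢 : AlgGroupoid G XG)
    (φP : P → P → H) (lact : G → P → P) (σt σs : XG → P) : G → H :=
  fun g => φP (σt (𝒢.t g)) (lact g (σs (𝒢.s g)))

lemma AlgGroupoid.cancel {G X : Type*} (𝒢 : AlgGroupoid G X) (h h' : G)
    (e : 𝒢.t h = 𝒢.t h') : 𝒢.mul h (𝒢.mul (𝒢.inv h) h') = h' := by
  rw [← 𝒢.mul_assoc h (𝒢.inv h) h' (𝒢.t_inv h).symm (by rw [𝒢.s_inv, e]),
      𝒢.mul_inv, e, 𝒢.unit_mul]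

lemma runique {G X P M : Type*} {𝒢 : AlgGroupoid G X} {π : P → M} {ε : P → X}
    {act : P → G → P} (hP : IsPrincipalBundle 𝒢 π ε act)
    (p : P) (h h' : G) (ht : 𝒢.t h = ε p) (ht' : 𝒢.t h' = ε p)
    (e : act p h = act p h') : h = h' := by
  have htt : 𝒢.t h = 𝒢.t h' := ht.trans ht'.symm
  have hk : 𝒢.t (𝒢.mul (𝒢.inv h) h') = 𝒢.s h := by
    rw [𝒢.t_mul _ _ (by rw [𝒢.s_inv, htt]), 𝒢.t_inv]
  have hεp : ε (act p h) = 𝒢.s h := hP.ε_act p h ht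
  have key : act (act p h) (𝒢.mul (𝒢.inv h) h') = act p h := by
    rw [hP.act_mul p h _ ht (by rw [hk]), 𝒢.cancel h h' htt, e]
  have := hP.free (act p h) _ (by rw [hk, hεp]) key
  have : 𝒢.mul (𝒢.inv h) h' = 𝒢.ι (𝒢.s h) := by rw [this, hεp]
  calc h = 𝒢.mul h (𝒢.ι (𝒢.s h)) := (𝒢.mul_unit h).symm
    _ = 𝒢.mul h (𝒢.mul (𝒢.inv h) h') := by rw [this]
    _ = h' := 𝒢.cancel h h' htt

lemma lunique {G XG H XH P : Type*} {𝒢 : AlgGroupoid G XG} {ℋ : AlgGroupoid H XH}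
    {π : P → XG} {ε : P → XH} {act : P → H → P} {lact : G → P → P}
    (hM : IsMoritaEquivalence 𝒢 ℋ π ε act lact)
    (p : P) (g g' : G) (hs : 𝒢.s g = π p) (hs' : 𝒢.s g' = π p)
    (htt : 𝒢.t g = 𝒢.t g') (e : lact g p = lact g' p) : g = g' := by
  have hk : 𝒢.s (𝒢.mul (𝒢.inv g') g) = π p := by
    rw [𝒢.s_mul _ _ (by rw [𝒢.s_inv, htt]), hs]
  have key : lact (𝒢.mul (𝒢.inv g') g) p = p := by
    rw [← hM.toGenMorphism.lact_mul _ _ _ hs (by rw [𝒢.s_inv, htt]), e,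
        hM.toGenMorphism.lact_mul _ _ _ hs' (by rw [𝒢.s_inv]),
        𝒢.inv_mul, hs', hM.toGenMorphism.lact_unit]
  have h1 : 𝒢.mul (𝒢.inv g') g = 𝒢.ι (𝒢.s g') := by
    rw [hM.lfree _ _ hk key, hs']
  calc g = 𝒢.mul g' (𝒢.mul (𝒢.inv g') g) := (𝒢.cancel g' g htt.symm).symm
    _ = 𝒢.mul g' (𝒢.ι (𝒢.s g')) := by rw [h1]
    _ = g' := 𝒢.mul_unit g'

/-- **Twisted injectivity for Morita equivalences.**  Let `P` be a Morita
equivalence between `𝒢` and `ℋ` with division maps `φR`, `φL`, sections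
`σα`, `σβ` of `π` over `Uα`, `Uβ`, and local cocycle
`Θ_{βα} g := φR (σβ (t g)) (g · σα (s g))`.  For arrows `g₁, g₂` with sources
in `Uα` and targets in `Uβ`: `Θ_{βα} g₁ = Θ_{βα} g₂` holds if and only if the
local momenta agree at the sources and targets of `g₁, g₂` and
`φL (σβ (t g₂), σβ (t g₁)) · g₁ = g₂ · φL (σα (s g₂), σα (s g₁))`. -/
theorem morita_twisted_injectivity {G XG H XH P : Type*}
    (𝒢 : AlgGroupoid G XG) (ℋ : AlgGroupoid H XH)
    (π : P → XG) (ε : P → XH) (act : P → H → P) (lact : G → P → P)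
    (hM : IsMoritaEquivalence 𝒢 ℋ π ε act lact)
    (φR : P → P → H) (hφR : IsDivisionMap ℋ π ε act φR)
    (φL : P → P → G) (hφL : IsLeftDivisionMap 𝒢 π ε lact φL)
    (Uα Uβ : Set XG) (σα σβ : XG → P)
    (hσα : ∀ x ∈ Uα, π (σα x) = x) (hσβ : ∀ x ∈ Uβ, π (σβ x) = x) :
    ∀ g₁ g₂ : G, 𝒢.s g₁ ∈ Uα → 𝒢.s g₂ ∈ Uα → 𝒢.t g₁ ∈ Uβ → 𝒢.t g₂ ∈ Uβ →
      ((Theta2 𝒢 φR lact σβ σα g₁ = Theta2 𝒢 φR lact σβ σα g₂ →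
        ε (σβ (𝒢.t g₁)) = ε (σβ (𝒢.t g₂)) ∧
        ε (σα (𝒢.s g₁)) = ε (σα (𝒢.s g₂)) ∧
        𝒢.mul (φL (σβ (𝒢.t g₂)) (σβ (𝒢.t g₁))) g₁ =
          𝒢.mul g₂ (φL (σα (𝒢.s g₂)) (σα (𝒢.s g₁)))) ∧
      ((ε (σβ (𝒢.t g₁)) = ε (σβ (𝒢.t g₂)) ∧
        ε (σα (𝒢.s g₁)) = ε (σα (𝒢.s g₂)) ∧
        𝒢.mul (φL (σβ (𝒢.t g₂)) (σβ (𝒢.t g₁))) g₁ =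
          𝒢.mul g₂ (φL (σα (𝒢.s g₂)) (σα (𝒢.s g₁)))) →
        Theta2 𝒢 φR lact σβ σα g₁ = Theta2 𝒢 φR lact σβ σα g₂)) := by
  intro g₁ g₂ hs1 hs2 ht1 ht2
  have hGP := hM.toGenMorphism
  have hPB := hGP.principal
  set p₁ := σβ (𝒢.t g₁) with hp1
  set p₂ := σβ (𝒢.t g₂) with hp2
  set q₁ := σα (𝒢.s g₁) with hq1
  set q₂ := σα (𝒢.s g₂) with hq2
  have hπp1 : π p₁ = 𝒢.t g₁ := hσβ _ ht1
  have hπp2 : π p₂ = 𝒢.t g₂ := hσβ _ ht2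
  have hπq1 : π q₁ = 𝒢.s g₁ := hσα _ hs1
  have hπq2 : π q₂ = 𝒢.s g₂ := hσα _ hs2
  set r₁ := lact g₁ q₁ with hr1
  set r₂ := lact g₂ q₂ with hr2
  have hπr1 : π r₁ = 𝒢.t g₁ := hGP.π_lact g₁ q₁ hπq1.symm
  have hπr2 : π r₂ = 𝒢.t g₂ := hGP.π_lact g₂ q₂ hπq2.symm
  have hεr1 : ε r₁ = ε q₁ := hGP.ε_lact g₁ q₁ hπq1.symm
  have hεr2 : ε r₂ = ε q₂ := hGP.ε_lact g₂ q₂ hπq2.symm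
  obtain ⟨hT1, hA1⟩ := hφR p₁ r₁ (hπp1.trans hπr1.symm)
  obtain ⟨hT2, hA2⟩ := hφR p₂ r₂ (hπp2.trans hπr2.symm)
  have hS1 : ℋ.s (φR p₁ r₁) = ε q₁ := by
    have h := hPB.ε_act p₁ (φR p₁ r₁) hT1
    rw [hA1] at h; rw [← h]; exact hεr1
  have hS2 : ℋ.s (φR p₂ r₂) = ε q₂ := by
    have h := hPB.ε_act p₂ (φR p₂ r₂) hT2
    rw [hA2] at h; rw [← h]; exact hεr2
  have hΘ1 : Theta2 𝒢 φR lact σβ σα g₁ = φR p₁ r₁ := rfl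
  have hΘ2 : Theta2 𝒢 φR lact σβ σα g₂ = φR p₂ r₂ := rfl
  constructor
  · intro hΘ
    rw [hΘ1, hΘ2] at hΘ
    have eβ : ε p₁ = ε p₂ := by rw [← hT1, ← hT2, hΘ]
    have eα : ε q₁ = ε q₂ := by rw [← hS1, ← hS2, hΘ]
    refine ⟨eβ, eα, ?_⟩
    obtain ⟨hta, hsa, hla⟩ := hφL p₂ p₁ eβ.symm
    obtain ⟨htb, hsb, hlb⟩ := hφL q₂ q₁ eα.symm
    refine lunique hM q₁ _ _ ?_ ?_ ?_ ?_
    · rw [𝒢.s_mul _ _ (by rw [hsa, hπp1]), hπq1]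
    · rw [𝒢.s_mul _ _ (by rw [htb, hπq2]), hsb]
    · rw [𝒢.t_mul _ _ (by rw [hsa, hπp1]), 𝒢.t_mul _ _ (by rw [htb, hπq2]),
          hta, hπp2]
    · rw [← hGP.lact_mul _ _ _ hπq1.symm (by rw [hsa, hπp1]),
          ← hGP.lact_mul _ _ _ hsb (by rw [htb, hπq2]), hlb, ← hr1, ← hr2,
          ← hA1, ← hGP.compat _ _ _ (by rw [hsa, hπp1]) hT1, hla, hΘ, hA2]
  · rintro ⟨eβ, eα, meq⟩
    rw [hΘ1, hΘ2]
    obtain ⟨hta, hsa, hla⟩ := hφL p₂ p₁ eβ.symm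
    obtain ⟨htb, hsb, hlb⟩ := hφL q₂ q₁ eα.symm
    refine runique hPB p₂ _ _ (by rw [hT1, eβ]) hT2 ?_
    rw [hA2, ← hla, hGP.compat _ _ _ (by rw [hsa, hπp1]) hT1, hA1, hr1,
        hGP.lact_mul _ _ _ hπq1.symm (by rw [hsa, hπp1]), meq,
        ← hGP.lact_mul _ _ _ hsb (by rw [htb, hπq2]), hlb, ← hr2]
end

section
/- Coboundary relation between the local cocycles of two equivalent generalized morphisms: let (P, π_P, ε_P) and (Q, π_Q, ε_Q) be generalized morphisms from 𝒢 to ℋ and Σ : P → Q an equivalence: π_Q ∘ Σ = π_P, ε_Q ∘ Σ = ε_P, Σ(p·h) = Σ(p)·h, and Σ(g·p) = g·Σ(p) whenever defined. Let σ¹_α : U_α → P, σ²_α : U_α → Q be sections of π_P, π_Q over subsets U_α ⊆ X_𝒢, define Σ_α(x) := φ_Q(σ²_α(x), Σ(σ¹_α(x))), and the local cocycles Θ^P_{βα}(g) := φ_P(σ¹_β(t g), g·σ¹_α(s g)), Θ^Q_{βα}(g) := φ_Q(σ²_β(t g), g·σ²_α(s g)) for arrows g with s(g) ∈ U_α, t(g)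 ∈ U_β. Then Θ^P_{βα}(g) = Σ_β(t g)⁻¹·Θ^Q_{βα}(g)·Σ_α(s g) for every such arrow g. -/
/-- Freeness gives cancellation: two arrows acting the same way on a point are
equal. -/
theorem IsPrincipalBundle.act_cancel {G X P M : Type*} {𝒢 : AlgGroupoid G X}
    {π : P → M} {ε : P → X} {act : P → G → P}
    (hB : IsPrincipalBundle 𝒢 π ε act) (p : P) (h1 h2 : G)
    (ht1 : 𝒢.t h1 = ε p) (ht2 : 𝒢.t h2 = ε p) (hact : act p h1 = act p h2) :
    h1 = h2 := by
  have hs1 : 𝒢.s (𝒢.inv h1) = 𝒢.t h2 := by rw [𝒢.s_inv, ht1, ht2]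
  have hk : 𝒢.mul h1 (𝒢.mul (𝒢.inv h1) h2) = h2 := by
    rw [← 𝒢.mul_assoc h1 (𝒢.inv h1) h2 (𝒢.t_inv h1).symm hs1, 𝒢.mul_inv, ht1,
      ← ht2, 𝒢.unit_mul]
  have htk : 𝒢.t (𝒢.mul (𝒢.inv h1) h2) = ε (act p h1) := by
    rw [𝒢.t_mul _ _ hs1, 𝒢.t_inv, hB.ε_act p h1 ht1]
  have hfree : 𝒢.mul (𝒢.inv h1) h2 = 𝒢.ι (ε (act p h1)) := by
    apply hB.free _ _ htk
    rw [hB.act_mul p h1 _ ht1 (by rw [𝒢.t_mul _ _ hs1, 𝒢.t_inv]), hk, hact]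
  have : 𝒢.mul h1 (𝒢.mul (𝒢.inv h1) h2) = h1 := by
    rw [hfree, hB.ε_act p h1 ht1, 𝒢.mul_unit]
  rw [hk] at this; exact this.symm

/-- **Coboundary relation between the local cocycles of two equivalent
generalized morphisms.**  Let `P`, `Q` be generalized morphisms from `𝒢` to
`ℋ` and `F : P → Q` an equivalence (preserving projections, momenta, the
right `ℋ`-action and the left `𝒢`-action).  With sections `σ1 α`, `σ2 α` of
`π_P`, `π_Q` over `U α`, `Σ_α x := φ_Q (σ2 α x) (F (σ1 α x))` and local
cocycles `Θ^P_{βα}`, `Θ^Q_{βα}`, one has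
`Θ^P_{βα} g = (Σ_β (t g))⁻¹ · Θ^Q_{βα} g · Σ_α (s g)` for every arrow `g`
with `s g ∈ U α` and `t g ∈ U β`. -/
theorem coboundary_relation_of_equivalence {G XG H XH P Q : Type*} {A : Type*}
    (𝒢 : AlgGroupoid G XG) (ℋ : AlgGroupoid H XH)
    (πP : P → XG) (εP : P → XH) (actP : P → H → P) (lactP : G → P → P)
    (πQ : Q → XG) (εQ : Q → XH) (actQ : Q → H → Q) (lactQ : G → Q → Q)
    (hP : IsGeneralizedMorphism 𝒢 ℋ πP εP actP lactP)
    (hQ : IsGeneralizedMorphism 𝒢 ℋ πQ εQ actQ lactQ)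
    (φP : P → P → H) (hφP : IsDivisionMap ℋ πP εP actP φP)
    (φQ : Q → Q → H) (hφQ : IsDivisionMap ℋ πQ εQ actQ φQ)
    (F : P → Q)
    (hFπ : ∀ p, πQ (F p) = πP p) (hFε : ∀ p, εQ (F p) = εP p)
    (hFact : ∀ p h, ℋ.t h = εP p → F (actP p h) = actQ (F p) h)
    (hFlact : ∀ g p, 𝒢.s g = πP p → F (lactP g p) = lactQ g (F p))
    (U : A → Set XG) (σ1 : A → XG → P) (σ2 : A → XG → Q)
    (hσ1 : ∀ α, ∀ x ∈ U α, πP (σ1 α x) = x)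
    (hσ2 : ∀ α, ∀ x ∈ U α, πQ (σ2 α x) = x) :
    ∀ (α β : A) (g : G), 𝒢.s g ∈ U α → 𝒢.t g ∈ U β →
      Theta2 𝒢 φP lactP (σ1 β) (σ1 α) g =
        ℋ.mul
          (ℋ.mul (ℋ.inv (φQ (σ2 β (𝒢.t g)) (F (σ1 β (𝒢.t g)))))
            (Theta2 𝒢 φQ lactQ (σ2 β) (σ2 α) g))
          (φQ (σ2 α (𝒢.s g)) (F (σ1 α (𝒢.s g)))) := by
  intro α β g hα hβ
  have hπα : πP (σ1 α (𝒢.s g)) = 𝒢.s g := hσ1 α _ hα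
  have hπβ : πP (σ1 β (𝒢.t g)) = 𝒢.t g := hσ1 β _ hβ
  have hπα2 : πQ (σ2 α (𝒢.s g)) = 𝒢.s g := hσ2 α _ hα
  have hπβ2 : πQ (σ2 β (𝒢.t g)) = 𝒢.t g := hσ2 β _ hβ
  set pα := σ1 α (𝒢.s g)
  set pβ := σ1 β (𝒢.t g)
  set qα := σ2 α (𝒢.s g)
  set qβ := σ2 β (𝒢.t g)
  -- division facts
  have hSα := hφQ qα (F pα) (by rw [hFπ, hπα2, hπα])
  have hSβ := hφQ qβ (F pβ) (by rw [hFπ, hπβ2, hπβ])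
  have hπlP : πP (lactP g pα) = 𝒢.t g := hP.π_lact g pα hπα.symm
  have hπlQ : πQ (lactQ g qα) = 𝒢.t g := hQ.π_lact g qα hπα2.symm
  have hΘP := hφP pβ (lactP g pα) (by rw [hπβ, hπlP])
  have hΘQ := hφQ qβ (lactQ g qα) (by rw [hπβ2, hπlQ])
  set ΘP := φP pβ (lactP g pα) with hΘPdef
  set ΘQ := φQ qβ (lactQ g qα) with hΘQdef
  set Sα := φQ qα (F pα)
  set Sβ := φQ qβ (F pβ)
  -- source/target bookkeeping
  have hsSβ : ℋ.s Sβ = εP pβ := by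
    have := hQ.principal.ε_act qβ Sβ hSβ.1
    rw [hSβ.2, hFε] at this; exact this.symm
  have hsSα : ℋ.s Sα = εP pα := by
    have := hQ.principal.ε_act qα Sα hSα.1
    rw [hSα.2, hFε] at this; exact this.symm
  have htΘP : ℋ.t ΘP = εP pβ := hΘP.1
  have hsΘQ : ℋ.s ΘQ = εQ qα := by
    have := hQ.principal.ε_act qβ ΘQ hΘQ.1
    rw [hΘQ.2, hQ.ε_lact g qα hπα2.symm] at this; exact this.symm
  -- the key computation
  have key : actQ qβ (ℋ.mul Sβ ΘP) = actQ qβ (ℋ.mul ΘQ Sα) := by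
    rw [← hQ.principal.act_mul qβ Sβ ΘP hSβ.1 (by rw [hsSβ, htΘP]),
      ← hQ.principal.act_mul qβ ΘQ Sα hΘQ.1 (by rw [hsΘQ, hSα.1]),
      hSβ.2, hΘQ.2, ← hFact pβ ΘP htΘP, hΘP.2, hFlact g pα hπα.symm,
      ← hSα.2, hQ.compat g qα Sα hπα2.symm hSα.1]
  have hmul1 : ℋ.t (ℋ.mul Sβ ΘP) = εQ qβ := by
    rw [ℋ.t_mul Sβ ΘP (by rw [hsSβ, htΘP]), hSβ.1]
  have hmul2 : ℋ.t (ℋ.mul ΘQ Sα) = εQ qβ := by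
    rw [ℋ.t_mul ΘQ Sα (by rw [hsΘQ, hSα.1]), hΘQ.1]
  have heq : ℋ.mul Sβ ΘP = ℋ.mul ΘQ Sα :=
    hQ.principal.act_cancel qβ _ _ hmul1 hmul2 key
  -- solve for ΘP
  show ΘP = ℋ.mul (ℋ.mul (ℋ.inv Sβ) ΘQ) Sα
  have hassoc : ℋ.mul (ℋ.inv Sβ) (ℋ.mul Sβ ΘP) = ΘP := by
    rw [← ℋ.mul_assoc _ _ _ (ℋ.s_inv Sβ) (by rw [hsSβ, htΘP]),
      ℋ.inv_mul, hsSβ, ← htΘP, ℋ.unit_mul]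
  rw [← hassoc, heq,
    ℋ.mul_assoc _ _ _ (by rw [ℋ.s_inv, hSβ.1, hΘQ.1]) (by rw [hsΘQ, hSα.1])]
end

section
/- Composition of generalized morphisms and its division map: let 𝔉, 𝒢, ℋ be groupoids, P a generalized morphism from 𝔉 to 𝒢 (data π₁ : P → X_𝔉, ε₁ : P → X_𝒢, division map φ_P) and Q a generalized morphism from 𝒢 to ℋ (data π₂ : Q → X_𝒢, ε₂ : Q → X_ℋ, division map φ_Q). On P ⊙ Q := {(p, q) : ε₁(p) = π₂(q)}, the relation (p, q) ∼ (p', q') iff there exists an arrow g of 𝒢 with t(g) = ε₁(p), p' = p·g and q' = g⁻¹·q, is an equivalence relation. On the quotient P ×_𝒢 Q := (P ⊙ Q)/∼: (i) π̄[p, q] := π₁(p) and ε̄[p, q] := ε₂(q) are well defined and π̄ is surjective; (ii) [p, q]·h := [p, q·h] (when t(h) = ε₂(q)) is a well-defined right ℋ-action with momentum ε̄, free and transitive on the fibers of π̄, whose division map is φ([p₁, q₁], [p₂, q₂]) = φ_Q(q₁, φ_P(p₁, p₂)·q₂) (this formula is independent of the chosen representatives); (iii) f·[p, q] := [f·p,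 q] (when s(f) = π₁(p)) is a well-defined left 𝔉-action with momentum π̄ making P ×_𝒢 Q a generalized morphism from 𝔉 to ℋ. -/
/-- The total space `P ⊙ Q = {(p, q) : ε₁ p = π₂ q}` underlying the
composition of two generalized morphisms. -/
def GMCompSpace {XG P Q : Type*} (ε₁ : P → XG) (π₂ : Q → XG) : Type _ :=
  {pq : P × Q // ε₁ pq.1 = π₂ pq.2}

/-- The relation `(p, q) ∼ (p·g, g⁻¹·q)` defining the quotient `P ×_𝒢 Q`. -/
def gmCompRel {G XG P Q : Type*} (𝒢 : AlgGroupoid G XG)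
    (ε₁ : P → XG) (π₂ : Q → XG) (actP : P → G → P) (lactQ : G → Q → Q) :
    GMCompSpace ε₁ π₂ → GMCompSpace ε₁ π₂ → Prop :=
  fun pq pq' => ∃ g : G, 𝒢.t g = ε₁ pq.1.1 ∧
    pq'.1.1 = actP pq.1.1 g ∧ pq'.1.2 = lactQ (𝒢.inv g) pq.1.2

open Classical in
/-- The right `ℋ`-action `[p, q]·h := [p, q·h]` on `P ⊙ Q`
(junk value where undefined). -/
noncomputable def gmCompAct {XG H XH P Q : Type*} (ℋ : AlgGroupoid H XH)
    (ε₁ : P → XG) (π₂ : Q → XG) (ε₂ : Q → XH) (actQ : Q → H → Q)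
    (hπ₂ : ∀ q h, ℋ.t h = ε₂ q → π₂ (actQ q h) = π₂ q) :
    GMCompSpace ε₁ π₂ → H → GMCompSpace ε₁ π₂ := fun pq h =>
  if hc : ℋ.t h = ε₂ pq.1.2 then
    ⟨(pq.1.1, actQ pq.1.2 h), by rw [hπ₂ _ _ hc]; exact pq.2⟩
  else pq

open Classical in
/-- The left `𝔉`-action `f·[p, q] := [f·p, q]` on `P ⊙ Q`
(junk value where undefined). -/
noncomputable def gmCompLact {F XF XG P Q : Type*} (𝔉 : AlgGroupoid F XF)
    (π₁ : P → XF) (ε₁ : P → XG) (π₂ : Q → XG) (lactP : F → P → P)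
    (hε₁ : ∀ f p, 𝔉.s f = π₁ p → ε₁ (lactP f p) = ε₁ p) :
    F → GMCompSpace ε₁ π₂ → GMCompSpace ε₁ π₂ := fun f pq =>
  if hc : 𝔉.s f = π₁ pq.1.1 then
    ⟨(lactP f pq.1.1, pq.1.2), by rw [hε₁ _ _ hc]; exact pq.2⟩
  else pq

/-! Everything is computed on representatives. The crux is that the right `ℋ`-action on
`P ×_𝒢 Q` is injective in the arrow: if `[p, q·h] = [p, q·h']`, the connecting arrow `g`
satisfies `p·g = p`, so it is a unit by freeness of `P`, whence `q·h = q·h'` and `h = h'` by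
freeness of `Q`. Since `[p₁, q₁·φ] = [p₂, q₂]` for `φ = φ_Q(q₁, φ_P(p₁, p₂)·q₂)`, injectivity
yields both freeness and the independence of `φ` from the chosen representatives. -/

namespace AlgGroupoid

variable {G X : Type*} (𝒢 : AlgGroupoid G X)

theorem inv_eq_of_mul_eq_unit {g k : G} (hgk : 𝒢.s g = 𝒢.t k)
    (h : 𝒢.mul g k = 𝒢.ι (𝒢.t g)) : 𝒢.inv g = k :=
  calc 𝒢.inv g = 𝒢.mul (𝒢.inv g) (𝒢.mul g k) := by rw [h, ← 𝒢.s_inv, 𝒢.mul_unit]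
    _ = 𝒢.mul (𝒢.mul (𝒢.inv g) g) k := (𝒢.mul_assoc _ _ _ (𝒢.s_inv g) hgk).symm
    _ = k := by rw [𝒢.inv_mul, hgk, 𝒢.unit_mul]

theorem inv_unit (x : X) : 𝒢.inv (𝒢.ι x) = 𝒢.ι x := by
  refine 𝒢.inv_eq_of_mul_eq_unit (by rw [𝒢.s_unit, 𝒢.t_unit]) ?_
  have h := 𝒢.unit_mul (𝒢.ι x)
  rwa [𝒢.t_unit] at h ⊢

theorem inv_inv (g : G) : 𝒢.inv (𝒢.inv g) = g :=
  𝒢.inv_eq_of_mul_eq_unit (𝒢.s_inv g) (by rw [𝒢.inv_mul, 𝒢.t_inv])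

theorem mul_inv_rev {g g' : G} (h : 𝒢.s g = 𝒢.t g') :
    𝒢.inv (𝒢.mul g g') = 𝒢.mul (𝒢.inv g') (𝒢.inv g) := by
  have hc : 𝒢.s (𝒢.inv g') = 𝒢.t (𝒢.inv g) := by rw [𝒢.s_inv, 𝒢.t_inv, h]
  refine 𝒢.inv_eq_of_mul_eq_unit (by rw [𝒢.s_mul _ _ h, 𝒢.t_mul _ _ hc, 𝒢.t_inv]) ?_
  calc 𝒢.mul (𝒢.mul g g') (𝒢.mul (𝒢.inv g') (𝒢.inv g))
      = 𝒢.mul g (𝒢.mul (𝒢.mul g' (𝒢.inv g')) (𝒢.inv g)) := by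
        rw [𝒢.mul_assoc _ _ _ h (by rw [𝒢.t_mul _ _ hc, 𝒢.t_inv]),
          𝒢.mul_assoc _ _ _ (𝒢.t_inv g').symm hc]
    _ = 𝒢.mul g (𝒢.inv g) := by rw [𝒢.mul_inv, ← 𝒢.s_inv g', hc, 𝒢.unit_mul]
    _ = 𝒢.ι (𝒢.t (𝒢.mul g g')) := by rw [𝒢.mul_inv, 𝒢.t_mul _ _ h]

theorem eq_of_mul_inv_eq_unit {h k : G} (hs : 𝒢.s h = 𝒢.s k)
    (he : 𝒢.mul h (𝒢.inv k) = 𝒢.ι (𝒢.t k)) : h = k := by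
  have hc : 𝒢.s h = 𝒢.t (𝒢.inv k) := by rw [𝒢.t_inv, hs]
  have ht : 𝒢.t h = 𝒢.t k := by rw [← 𝒢.t_mul _ _ hc, he, 𝒢.t_unit]
  rw [← 𝒢.inv_inv h, 𝒢.inv_eq_of_mul_eq_unit hc (by rw [he, ht]), 𝒢.inv_inv]

end AlgGroupoid

namespace IsPrincipalBundle

variable {G X P M : Type*} {𝒢 : AlgGroupoid G X} {π : P → M} {ε : P → X} {act : P → G → P}

theorem act_act_inv (hB : IsPrincipalBundle 𝒢 π ε act) {p : P} {g : G} (hg : 𝒢.t g = ε p) :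
    act (act p g) (𝒢.inv g) = p := by
  rw [hB.act_mul p g _ hg (𝒢.t_inv g).symm, 𝒢.mul_inv, hg, hB.act_unit]

theorem eq_of_act_eq (hB : IsPrincipalBundle 𝒢 π ε act) {p : P} {h k : G}
    (hh : 𝒢.t h = ε p) (hk : 𝒢.t k = ε p) (he : act p h = act p k) : h = k := by
  have hs : 𝒢.s h = 𝒢.s k := by rw [← hB.ε_act p h hh, ← hB.ε_act p k hk, he]
  have hc : 𝒢.s h = 𝒢.t (𝒢.inv k) := by rw [𝒢.t_inv, hs]
  refine 𝒢.eq_of_mul_inv_eq_unit hs ?_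
  rw [hk]
  refine hB.free p _ (by rw [𝒢.t_mul _ _ hc, hh]) ?_
  rw [← hB.act_mul p h _ hh hc, he, hB.act_act_inv hk]

end IsPrincipalBundle

theorem IsGeneralizedMorphism.inv_lact_lact {G XG H XH P : Type*} {𝒢 : AlgGroupoid G XG}
    {ℋ : AlgGroupoid H XH} {π : P → XG} {ε : P → XH} {act : P → H → P} {lact : G → P → P}
    (hM : IsGeneralizedMorphism 𝒢 ℋ π ε act lact) {g : G} {p : P} (hg : 𝒢.s g = π p) :
    lact (𝒢.inv g) (lact g p) = p := by
  rw [hM.lact_mul _ _ _ hg (𝒢.s_inv g), 𝒢.inv_mul, hg, hM.lact_unit]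

def gmCompDiv {G XG H P Q : Type*} {ε₁ : P → XG} {π₂ : Q → XG} (φP : P → P → G)
    (lactQ : G → Q → Q) (φQ : Q → Q → H) (pq pq' : GMCompSpace ε₁ π₂) : H :=
  φQ pq.1.2 (lactQ (φP pq.1.1 pq'.1.1) pq'.1.2)

section Composition

variable {F XF G XG H XH P Q : Type*} {𝔉 : AlgGroupoid F XF} {𝒢 : AlgGroupoid G XG}
  {ℋ : AlgGroupoid H XH} {π₁ : P → XF} {ε₁ : P → XG} {actP : P → G → P} {lactP : F → P → P}
  {π₂ : Q → XG} {ε₂ : Q → XH} {actQ : Q → H → Q} {lactQ : G → Q → Q}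
  {hπ₂ : ∀ q h, ℋ.t h = ε₂ q → π₂ (actQ q h) = π₂ q}
  {hε₁ : ∀ f p, 𝔉.s f = π₁ p → ε₁ (lactP f p) = ε₁ p}

local infix:50 " ∼ " => gmCompRel 𝒢 ε₁ π₂ actP lactQ

theorem GMCompSpace.ext {pq pq' : GMCompSpace ε₁ π₂} (h₁ : pq.1.1 = pq'.1.1)
    (h₂ : pq.1.2 = pq'.1.2) : pq = pq' :=
  Subtype.ext (Prod.ext h₁ h₂)

theorem gmCompRel_equivalence (hPB : IsPrincipalBundle 𝒢 π₁ ε₁ actP)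
    (hQ : IsGeneralizedMorphism 𝒢 ℋ π₂ ε₂ actQ lactQ) :
    Equivalence (gmCompRel 𝒢 ε₁ π₂ actP lactQ) where
  refl pq :=
    ⟨𝒢.ι (ε₁ pq.1.1), 𝒢.t_unit _, (hPB.act_unit _).symm, by rw [𝒢.inv_unit, pq.2, hQ.lact_unit]⟩
  symm := by
    rintro pq pq' ⟨g, hg, hp, hq⟩
    refine ⟨𝒢.inv g, by rw [𝒢.t_inv, hp, hPB.ε_act _ _ hg], by rw [hp, hPB.act_act_inv hg], ?_⟩
    rw [hq, hQ.inv_lact_lact (by rw [𝒢.s_inv, hg, pq.2])]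
  trans := by
    rintro pq pq' pq'' ⟨g, hg, hp, hq⟩ ⟨g', hg', hp', hq'⟩
    have hgg' : 𝒢.s g = 𝒢.t g' := by rw [hg', hp, hPB.ε_act _ _ hg]
    refine ⟨𝒢.mul g g', by rw [𝒢.t_mul _ _ hgg', hg],
      by rw [hp', hp, hPB.act_mul _ _ _ hg hgg'], ?_⟩
    rw [hq', hq, 𝒢.mul_inv_rev hgg', hQ.lact_mul _ _ _ (by rw [𝒢.s_inv, hg, pq.2])
      (by rw [𝒢.s_inv, 𝒢.t_inv, hgg'])]

theorem gmCompRel.π_eq (hPB : IsPrincipalBundle 𝒢 π₁ ε₁ actP) {pq pq' : GMCompSpace ε₁ π₂}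
    (hrel : pq ∼ pq') : π₁ pq.1.1 = π₁ pq'.1.1 := by
  obtain ⟨g, hg, hp, -⟩ := hrel
  rw [hp, hPB.π_act _ _ hg]

theorem gmCompRel.ε_eq (hQ : IsGeneralizedMorphism 𝒢 ℋ π₂ ε₂ actQ lactQ)
    {pq pq' : GMCompSpace ε₁ π₂} (hrel : pq ∼ pq') : ε₂ pq.1.2 = ε₂ pq'.1.2 := by
  obtain ⟨g, hg, -, hq⟩ := hrel
  rw [hq, hQ.ε_lact _ _ (by rw [𝒢.s_inv, hg, pq.2])]

theorem gmComp_π_surjective (hsurj₁ : Function.Surjective π₁)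
    (hsurj₂ : Function.Surjective π₂) :
    Function.Surjective (fun pq : GMCompSpace ε₁ π₂ => π₁ pq.1.1) := by
  intro x
  obtain ⟨p, rfl⟩ := hsurj₁ x
  obtain ⟨q, hq⟩ := hsurj₂ (ε₁ p)
  exact ⟨⟨(p, q), hq.symm⟩, rfl⟩

theorem gmCompAct_fst (pq : GMCompSpace ε₁ π₂) (h : H) :
    (gmCompAct ℋ ε₁ π₂ ε₂ actQ hπ₂ pq h).1.1 = pq.1.1 := by
  by_cases hc : ℋ.t h = ε₂ pq.1.2 <;> simp [gmCompAct, hc]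

theorem gmCompAct_snd {pq : GMCompSpace ε₁ π₂} {h : H} (hc : ℋ.t h = ε₂ pq.1.2) :
    (gmCompAct ℋ ε₁ π₂ ε₂ actQ hπ₂ pq h).1.2 = actQ pq.1.2 h := by
  simp [gmCompAct, hc]

theorem gmCompRel.gmCompAct (hQ : IsGeneralizedMorphism 𝒢 ℋ π₂ ε₂ actQ lactQ)
    {pq pq' : GMCompSpace ε₁ π₂} {h : H} (hrel : pq ∼ pq') (hc : ℋ.t h = ε₂ pq.1.2) :
    gmCompAct ℋ ε₁ π₂ ε₂ actQ hπ₂ pq h ∼ gmCompAct ℋ ε₁ π₂ ε₂ actQ hπ₂ pq' h := by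
  have hc' : ℋ.t h = ε₂ pq'.1.2 := hc.trans (hrel.ε_eq hQ)
  obtain ⟨g, hg, hp, hq⟩ := hrel
  refine ⟨g, by rwa [gmCompAct_fst], by rwa [gmCompAct_fst, gmCompAct_fst], ?_⟩
  rw [gmCompAct_snd hc, gmCompAct_snd hc', hq,
    hQ.compat _ _ _ (by rw [𝒢.s_inv, hg, pq.2]) hc]

theorem ε_gmCompAct (hQB : IsPrincipalBundle ℋ π₂ ε₂ actQ) {pq : GMCompSpace ε₁ π₂} {h : H}
    (hc : ℋ.t h = ε₂ pq.1.2) : ε₂ (gmCompAct ℋ ε₁ π₂ ε₂ actQ hπ₂ pq h).1.2 = ℋ.s h := by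
  rw [gmCompAct_snd hc, hQB.ε_act _ _ hc]

theorem gmCompAct_unit (hQB : IsPrincipalBundle ℋ π₂ ε₂ actQ) (pq : GMCompSpace ε₁ π₂) :
    gmCompAct ℋ ε₁ π₂ ε₂ actQ hπ₂ pq (ℋ.ι (ε₂ pq.1.2)) = pq :=
  GMCompSpace.ext (gmCompAct_fst _ _) ((gmCompAct_snd (ℋ.t_unit _)).trans (hQB.act_unit _))

theorem gmCompAct_gmCompAct (hQB : IsPrincipalBundle ℋ π₂ ε₂ actQ)
    {pq : GMCompSpace ε₁ π₂} {h h' : H} (hc : ℋ.t h = ε₂ pq.1.2) (hs : ℋ.s h = ℋ.t h') :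
    gmCompAct ℋ ε₁ π₂ ε₂ actQ hπ₂ (gmCompAct ℋ ε₁ π₂ ε₂ actQ hπ₂ pq h) h' =
      gmCompAct ℋ ε₁ π₂ ε₂ actQ hπ₂ pq (ℋ.mul h h') := by
  have hc' : ℋ.t h' = ε₂ (gmCompAct ℋ ε₁ π₂ ε₂ actQ hπ₂ pq h).1.2 := by
    rw [ε_gmCompAct hQB hc, hs]
  refine GMCompSpace.ext (by simp only [gmCompAct_fst]) ?_
  rw [gmCompAct_snd hc', gmCompAct_snd hc, gmCompAct_snd (by rw [ℋ.t_mul _ _ hs, hc]),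
    hQB.act_mul _ _ _ hc hs]

theorem eq_of_gmCompRel_gmCompAct (hPB : IsPrincipalBundle 𝒢 π₁ ε₁ actP)
    (hQ : IsGeneralizedMorphism 𝒢 ℋ π₂ ε₂ actQ lactQ) {pq : GMCompSpace ε₁ π₂} {h h' : H}
    (hc : ℋ.t h = ε₂ pq.1.2) (hc' : ℋ.t h' = ε₂ pq.1.2)
    (hrel : gmCompAct ℋ ε₁ π₂ ε₂ actQ hπ₂ pq h ∼ gmCompAct ℋ ε₁ π₂ ε₂ actQ hπ₂ pq h') :
    h = h' := by
  obtain ⟨g, hg, hp, hq⟩ := hrel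
  simp only [gmCompAct_fst] at hg hp
  have hg_unit : g = 𝒢.ι (ε₁ pq.1.1) := hPB.free _ _ hg hp.symm
  rw [gmCompAct_snd hc, gmCompAct_snd hc', hg_unit, 𝒢.inv_unit, pq.2,
    ← hQ.principal.π_act _ _ hc, hQ.lact_unit] at hq
  exact hQ.principal.eq_of_act_eq hc hc' hq.symm

theorem gmCompDiv_spec (hPB : IsPrincipalBundle 𝒢 π₁ ε₁ actP)
    (hQ : IsGeneralizedMorphism 𝒢 ℋ π₂ ε₂ actQ lactQ) {φP : P → P → G}
    (hφP : IsDivisionMap 𝒢 π₁ ε₁ actP φP) {φQ : Q → Q → H}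
    (hφQ : IsDivisionMap ℋ π₂ ε₂ actQ φQ) {pq pq' : GMCompSpace ε₁ π₂}
    (hπ : π₁ pq.1.1 = π₁ pq'.1.1) :
    ℋ.t (gmCompDiv φP lactQ φQ pq pq') = ε₂ pq.1.2 ∧
      gmCompAct ℋ ε₁ π₂ ε₂ actQ hπ₂ pq (gmCompDiv φP lactQ φQ pq pq') ∼ pq' := by
  unfold gmCompDiv
  obtain ⟨hg, hgp⟩ := hφP _ _ hπ
  have hsg : 𝒢.s (φP pq.1.1 pq'.1.1) = π₂ pq'.1.2 := by rw [← hPB.ε_act _ _ hg, hgp, pq'.2]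
  obtain ⟨hk, hkq⟩ := hφQ pq.1.2 (lactQ (φP pq.1.1 pq'.1.1) pq'.1.2)
    (by rw [hQ.π_lact _ _ hsg, hg, pq.2])
  refine ⟨hk, φP pq.1.1 pq'.1.1, by rwa [gmCompAct_fst], by rw [gmCompAct_fst, hgp], ?_⟩
  rw [gmCompAct_snd hk, hkq, hQ.inv_lact_lact hsg]

theorem gmCompDiv_eq_of_gmCompRel (hPB : IsPrincipalBundle 𝒢 π₁ ε₁ actP)
    (hQ : IsGeneralizedMorphism 𝒢 ℋ π₂ ε₂ actQ lactQ) {φP : P → P → G}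
    (hφP : IsDivisionMap 𝒢 π₁ ε₁ actP φP) {φQ : Q → Q → H}
    (hφQ : IsDivisionMap ℋ π₂ ε₂ actQ φQ) {pq pq' rr ss : GMCompSpace ε₁ π₂}
    (hπ : π₁ pq.1.1 = π₁ pq'.1.1) (hr : pq ∼ rr) (hs : pq' ∼ ss) :
    gmCompDiv φP lactQ φQ pq pq' = gmCompDiv φP lactQ φQ rr ss := by
  have hequiv := gmCompRel_equivalence hPB hQ
  obtain ⟨hk, hk_rel⟩ := gmCompDiv_spec (hπ₂ := hQ.principal.π_act) hPB hQ hφP hφQ hπ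
  obtain ⟨hk', hk'_rel⟩ := gmCompDiv_spec (hπ₂ := hQ.principal.π_act) hPB hQ hφP hφQ
    ((hr.π_eq hPB).symm.trans (hπ.trans (hs.π_eq hPB)))
  have hkr : ℋ.t (gmCompDiv φP lactQ φQ pq pq') = ε₂ rr.1.2 := hk.trans (hr.ε_eq hQ)
  refine eq_of_gmCompRel_gmCompAct (hπ₂ := hQ.principal.π_act) hPB hQ hkr hk' ?_
  -- rr·k ∼ pq·k ∼ pq' ∼ ss ∼ rr·k'
  exact hequiv.trans (hequiv.trans ((hequiv.symm hr).gmCompAct hQ hkr) hk_rel)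
    (hequiv.trans hs (hequiv.symm hk'_rel))

theorem gmCompLact_fst {f : F} {pq : GMCompSpace ε₁ π₂} (hc : 𝔉.s f = π₁ pq.1.1) :
    (gmCompLact 𝔉 π₁ ε₁ π₂ lactP hε₁ f pq).1.1 = lactP f pq.1.1 := by
  simp [gmCompLact, hc]

theorem gmCompLact_snd (f : F) (pq : GMCompSpace ε₁ π₂) :
    (gmCompLact 𝔉 π₁ ε₁ π₂ lactP hε₁ f pq).1.2 = pq.1.2 := by
  by_cases hc : 𝔉.s f = π₁ pq.1.1 <;> simp [gmCompLact, hc]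

theorem gmCompRel.gmCompLact (hP : IsGeneralizedMorphism 𝔉 𝒢 π₁ ε₁ actP lactP)
    {f : F} {pq pq' : GMCompSpace ε₁ π₂} (hf : 𝔉.s f = π₁ pq.1.1) (hrel : pq ∼ pq') :
    gmCompLact 𝔉 π₁ ε₁ π₂ lactP hε₁ f pq ∼ gmCompLact 𝔉 π₁ ε₁ π₂ lactP hε₁ f pq' := by
  have hf' : 𝔉.s f = π₁ pq'.1.1 := hf.trans (hrel.π_eq hP.principal)
  obtain ⟨g, hg, hp, hq⟩ := hrel
  refine ⟨g, by rw [gmCompLact_fst hf, hP.ε_lact _ _ hf, hg], ?_, ?_⟩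
  · rw [gmCompLact_fst hf, gmCompLact_fst hf', hp, hP.compat _ _ _ hf hg]
  · rwa [gmCompLact_snd, gmCompLact_snd]

theorem π_gmCompLact (hP : IsGeneralizedMorphism 𝔉 𝒢 π₁ ε₁ actP lactP) {f : F}
    {pq : GMCompSpace ε₁ π₂} (hf : 𝔉.s f = π₁ pq.1.1) :
    π₁ (gmCompLact 𝔉 π₁ ε₁ π₂ lactP hε₁ f pq).1.1 = 𝔉.t f := by
  rw [gmCompLact_fst hf, hP.π_lact _ _ hf]

theorem gmCompLact_unit (hP : IsGeneralizedMorphism 𝔉 𝒢 π₁ ε₁ actP lactP)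
    (pq : GMCompSpace ε₁ π₂) : gmCompLact 𝔉 π₁ ε₁ π₂ lactP hε₁ (𝔉.ι (π₁ pq.1.1)) pq = pq :=
  GMCompSpace.ext ((gmCompLact_fst (𝔉.s_unit _)).trans (hP.lact_unit _)) (gmCompLact_snd _ _)

theorem gmCompLact_gmCompLact (hP : IsGeneralizedMorphism 𝔉 𝒢 π₁ ε₁ actP lactP)
    {f f' : F} {pq : GMCompSpace ε₁ π₂} (hf' : 𝔉.s f' = π₁ pq.1.1) (hff' : 𝔉.s f = 𝔉.t f') :
    gmCompLact 𝔉 π₁ ε₁ π₂ lactP hε₁ f (gmCompLact 𝔉 π₁ ε₁ π₂ lactP hε₁ f' pq) =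
      gmCompLact 𝔉 π₁ ε₁ π₂ lactP hε₁ (𝔉.mul f f') pq := by
  refine GMCompSpace.ext ?_ (by simp only [gmCompLact_snd])
  rw [gmCompLact_fst (by rw [π_gmCompLact hP hf', hff']), gmCompLact_fst hf',
    gmCompLact_fst (by rw [𝔉.s_mul _ _ hff', hf']), hP.lact_mul _ _ _ hf' hff']

theorem gmCompAct_gmCompLact {f : F} {pq : GMCompSpace ε₁ π₂} {h : H}
    (hf : 𝔉.s f = π₁ pq.1.1) (hc : ℋ.t h = ε₂ pq.1.2) :
    gmCompAct ℋ ε₁ π₂ ε₂ actQ hπ₂ (gmCompLact 𝔉 π₁ ε₁ π₂ lactP hε₁ f pq) h =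
      gmCompLact 𝔉 π₁ ε₁ π₂ lactP hε₁ f (gmCompAct ℋ ε₁ π₂ ε₂ actQ hπ₂ pq h) := by
  refine GMCompSpace.ext ?_ ?_
  · rw [gmCompAct_fst, gmCompLact_fst hf, gmCompLact_fst (by rwa [gmCompAct_fst]), gmCompAct_fst]
  · rw [gmCompAct_snd (by rwa [gmCompLact_snd]), gmCompLact_snd, gmCompLact_snd, gmCompAct_snd hc]

end Composition

/-- **Composition of generalized morphisms and its division map.**  Let `P`
be a generalized morphism from `𝔉` to `𝒢` and `Q` a generalized morphism
from `𝒢` to `ℋ`.  Then on `P ⊙ Q = {(p, q) : ε₁ p = π₂ q}` the relation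
`(p, q) ∼ (p·g, g⁻¹·q)` is an equivalence relation, and on the quotient
`P ×_𝒢 Q`: the projection `[p, q] ↦ π₁ p` and momentum `[p, q] ↦ ε₂ q` are
well defined, the projection is surjective; `[p, q]·h := [p, q·h]` is a
well-defined right `ℋ`-action which is principal (momentum law, invariance,
unit, associativity, freeness and transitivity on fibers of the projection)
with division map `φ([p₁,q₁],[p₂,q₂]) = φ_Q (q₁, φ_P (p₁,p₂)·q₂)`
(independent of representatives); and `f·[p, q] := [f·p, q]` is a
well-defined compatible left `𝔉`-action, making `P ×_𝒢 Q` a generalized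
morphism from `𝔉` to `ℋ`. -/
theorem composition_of_generalized_morphisms
    {F XF G XG H XH P Q : Type*}
    (𝔉 : AlgGroupoid F XF) (𝒢 : AlgGroupoid G XG) (ℋ : AlgGroupoid H XH)
    (π₁ : P → XF) (ε₁ : P → XG) (actP : P → G → P) (lactP : F → P → P)
    (π₂ : Q → XG) (ε₂ : Q → XH) (actQ : Q → H → Q) (lactQ : G → Q → Q)
    (hP : IsGeneralizedMorphism 𝔉 𝒢 π₁ ε₁ actP lactP)
    (hQ : IsGeneralizedMorphism 𝒢 ℋ π₂ ε₂ actQ lactQ)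
    (φP : P → P → G) (hφP : IsDivisionMap 𝒢 π₁ ε₁ actP φP)
    (φQ : Q → Q → H) (hφQ : IsDivisionMap ℋ π₂ ε₂ actQ φQ) :
    -- the relation is an equivalence relation
    Equivalence (gmCompRel 𝒢 ε₁ π₂ actP lactQ) ∧
    -- (i) projection and momentum are well defined, projection surjective
    (∀ pq pq', gmCompRel 𝒢 ε₁ π₂ actP lactQ pq pq' → π₁ pq.1.1 = π₁ pq'.1.1) ∧
    (∀ pq pq', gmCompRel 𝒢 ε₁ π₂ actP lactQ pq pq' → ε₂ pq.1.2 = ε₂ pq'.1.2) ∧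
    Function.Surjective (fun pq : GMCompSpace ε₁ π₂ => π₁ pq.1.1) ∧
    -- (ii) the right ℋ-action descends to the quotient ...
    (∀ pq pq' h, gmCompRel 𝒢 ε₁ π₂ actP lactQ pq pq' → ℋ.t h = ε₂ pq.1.2 →
      gmCompRel 𝒢 ε₁ π₂ actP lactQ
        (gmCompAct ℋ ε₁ π₂ ε₂ actQ hQ.principal.π_act pq h)
        (gmCompAct ℋ ε₁ π₂ ε₂ actQ hQ.principal.π_act pq' h)) ∧
    -- ... with momentum ε₂ ...
    (∀ pq h, ℋ.t h = ε₂ pq.1.2 →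
      ε₂ ((gmCompAct ℋ ε₁ π₂ ε₂ actQ hQ.principal.π_act pq h).1.2) = ℋ.s h) ∧
    -- ... leaving the projection invariant ...
    (∀ pq h, ℋ.t h = ε₂ pq.1.2 →
      π₁ ((gmCompAct ℋ ε₁ π₂ ε₂ actQ hQ.principal.π_act pq h).1.1) = π₁ pq.1.1) ∧
    -- ... unit and associativity laws ...
    (∀ pq, gmCompAct ℋ ε₁ π₂ ε₂ actQ hQ.principal.π_act pq (ℋ.ι (ε₂ pq.1.2)) = pq) ∧
    (∀ pq h h', ℋ.t h = ε₂ pq.1.2 → ℋ.s h = ℋ.t h' →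
      gmCompAct ℋ ε₁ π₂ ε₂ actQ hQ.principal.π_act
          (gmCompAct ℋ ε₁ π₂ ε₂ actQ hQ.principal.π_act pq h) h' =
        gmCompAct ℋ ε₁ π₂ ε₂ actQ hQ.principal.π_act pq (ℋ.mul h h')) ∧
    -- ... free on the quotient ...
    (∀ pq h, ℋ.t h = ε₂ pq.1.2 →
      gmCompRel 𝒢 ε₁ π₂ actP lactQ
        (gmCompAct ℋ ε₁ π₂ ε₂ actQ hQ.principal.π_act pq h) pq →
      h = ℋ.ι (ε₂ pq.1.2)) ∧
    -- ... transitive on the fibers of the projection, with division map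
    -- φ([p₁,q₁],[p₂,q₂]) = φ_Q (q₁, φ_P (p₁,p₂)·q₂) ...
    (∀ pq pq', π₁ pq.1.1 = π₁ pq'.1.1 →
      ℋ.t (φQ pq.1.2 (lactQ (φP pq.1.1 pq'.1.1) pq'.1.2)) = ε₂ pq.1.2 ∧
      gmCompRel 𝒢 ε₁ π₂ actP lactQ
        (gmCompAct ℋ ε₁ π₂ ε₂ actQ hQ.principal.π_act pq
          (φQ pq.1.2 (lactQ (φP pq.1.1 pq'.1.1) pq'.1.2))) pq') ∧
    -- ... whose formula is independent of the chosen representatives ...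
    (∀ pq pq' rr ss, π₁ pq.1.1 = π₁ pq'.1.1 →
      gmCompRel 𝒢 ε₁ π₂ actP lactQ pq rr → gmCompRel 𝒢 ε₁ π₂ actP lactQ pq' ss →
      φQ pq.1.2 (lactQ (φP pq.1.1 pq'.1.1) pq'.1.2) =
        φQ rr.1.2 (lactQ (φP rr.1.1 ss.1.1) ss.1.2)) ∧
    -- (iii) the left 𝔉-action descends to the quotient ...
    (∀ f pq pq', 𝔉.s f = π₁ pq.1.1 → gmCompRel 𝒢 ε₁ π₂ actP lactQ pq pq' →
      gmCompRel 𝒢 ε₁ π₂ actP lactQ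
        (gmCompLact 𝔉 π₁ ε₁ π₂ lactP hP.ε_lact f pq)
        (gmCompLact 𝔉 π₁ ε₁ π₂ lactP hP.ε_lact f pq')) ∧
    -- ... with momentum the projection ...
    (∀ f pq, 𝔉.s f = π₁ pq.1.1 →
      π₁ ((gmCompLact 𝔉 π₁ ε₁ π₂ lactP hP.ε_lact f pq).1.1) = 𝔉.t f) ∧
    -- ... unit and associativity laws ...
    (∀ pq, gmCompLact 𝔉 π₁ ε₁ π₂ lactP hP.ε_lact (𝔉.ι (π₁ pq.1.1)) pq = pq) ∧
    (∀ f f' pq, 𝔉.s f' = π₁ pq.1.1 → 𝔉.s f = 𝔉.t f' →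
      gmCompLact 𝔉 π₁ ε₁ π₂ lactP hP.ε_lact f
          (gmCompLact 𝔉 π₁ ε₁ π₂ lactP hP.ε_lact f' pq) =
        gmCompLact 𝔉 π₁ ε₁ π₂ lactP hP.ε_lact (𝔉.mul f f') pq) ∧
    -- ... leaving the momentum ε₂ invariant ...
    (∀ f pq, 𝔉.s f = π₁ pq.1.1 →
      ε₂ ((gmCompLact 𝔉 π₁ ε₁ π₂ lactP hP.ε_lact f pq).1.2) = ε₂ pq.1.2) ∧
    -- ... and commuting with the right ℋ-action.
    (∀ f pq h, 𝔉.s f = π₁ pq.1.1 → ℋ.t h = ε₂ pq.1.2 →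
      gmCompAct ℋ ε₁ π₂ ε₂ actQ hQ.principal.π_act
          (gmCompLact 𝔉 π₁ ε₁ π₂ lactP hP.ε_lact f pq) h =
        gmCompLact 𝔉 π₁ ε₁ π₂ lactP hP.ε_lact f
          (gmCompAct ℋ ε₁ π₂ ε₂ actQ hQ.principal.π_act pq h)) := by
  have hPB := hP.principal
  have hQB := hQ.principal
  exact ⟨gmCompRel_equivalence hPB hQ, fun _ _ hr => hr.π_eq hPB, fun _ _ hr => hr.ε_eq hQ,
    gmComp_π_surjective hPB.π_surj hQB.π_surj, fun _ _ _ hr hc => hr.gmCompAct hQ hc,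
    fun _ _ hc => ε_gmCompAct hQB hc, fun pq h _ => congrArg π₁ (gmCompAct_fst pq h),
    gmCompAct_unit hQB, fun _ _ _ hc hs => gmCompAct_gmCompAct hQB hc hs,
    fun _ _ hc hrel => eq_of_gmCompRel_gmCompAct hPB hQ hc (ℋ.t_unit _)
      (by rwa [gmCompAct_unit hQB]),
    fun _ _ hπ => gmCompDiv_spec hPB hQ hφP hφQ hπ,
    fun _ _ _ _ hπ hr hs => gmCompDiv_eq_of_gmCompRel hPB hQ hφP hφQ hπ hr hs,
    fun _ _ _ hf hr => hr.gmCompLact hP hf, fun _ _ hf => π_gmCompLact hP hf,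
    gmCompLact_unit hP, fun _ _ _ hf' hff' => gmCompLact_gmCompLact hP hf' hff',
    fun f pq _ => congrArg ε₂ (gmCompLact_snd f pq), fun _ _ _ hf hc => gmCompAct_gmCompLact hf hc⟩
end

section
/- The composition of a Morita equivalence with its inverse is the unit bundle: let P be a Morita equivalence between 𝒢 and ℋ with division maps φ^R, φ^L. Consider P ⊙_π P := {(p₁, p₂) : π(p₁) = π(p₂)} and the map Φ(p₁, p₂) := φ^R(p₁, p₂) into the arrows of ℋ. Then: (a) Φ(g·p₁, g·p₂) = Φ(p₁, p₂) for every arrow g of 𝒢 with s(g) = π(p₁), so Φ descends to the quotient of P ⊙_π P by the diagonal left 𝒢-action; (b) t(Φ(p₁, p₂)) = ε(p₁) and s(Φ(p₁, p₂)) = ε(p₂); (c) Φ(p₁·h⁻¹, p₂) = h·Φ(p₁, p₂) when s(h) = ε(p₁), and Φ(p₁, p₂·h) = Φ(p₁, p₂)·h when t(h) = ε(p₂); (d) Φ is surjective onto the arrows of ℋ; (e) if Φ(p₁, p₂) = Φ(q₁, q₂) then there exists an arrow g of 𝒢 with s(g) = π(p₁), q₁ = g·p₁ and q₂ = g·p₂.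 Consequently Φ induces a bijection from (P ⊙_π P)/𝒢 onto the set of arrows of ℋ, identifying the composite bundle P ∘ P⁻¹ with the unit bundle of ℋ. -/
/-- **The composition of a Morita equivalence with its inverse is the unit
bundle.**  Let `P` be a Morita equivalence between `𝒢` and `ℋ` with division
maps `φR`, `φL`, and consider the map `Φ (p₁, p₂) := φR p₁ p₂` on
`P ⊙_π P = {(p₁, p₂) : π p₁ = π p₂}` with values in the arrows of `ℋ`.  Then:
(a) `Φ` is invariant under the diagonal left `𝒢`-action, hence descends to
`(P ⊙_π P)/𝒢`;
(b) `t (Φ (p₁, p₂)) = ε p₁` and `s (Φ (p₁, p₂)) = ε p₂`;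
(c) `Φ (p₁·h⁻¹, p₂) = h · Φ (p₁, p₂)` when `s h = ε p₁`, and
`Φ (p₁, p₂·h) = Φ (p₁, p₂) · h` when `t h = ε p₂`;
(d) `Φ` is surjective onto the arrows of `ℋ`;
(e) `Φ (p₁, p₂) = Φ (q₁, q₂)` implies that `(q₁, q₂)` is obtained from
`(p₁, p₂)` by the diagonal action of a single arrow `g` of `𝒢`.
Consequently `Φ` induces a bijection `(P ⊙_π P)/𝒢 ≅ ℋ`, identifying the
composite `P ∘ P⁻¹` with the unit bundle of `ℋ`. -/
theorem morita_composition_with_inverse_is_unit_bundle {G XG H XH P : Type*}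
    (𝒢 : AlgGroupoid G XG) (ℋ : AlgGroupoid H XH)
    (π : P → XG) (ε : P → XH) (act : P → H → P) (lact : G → P → P)
    (hM : IsMoritaEquivalence 𝒢 ℋ π ε act lact)
    (φR : P → P → H) (hφR : IsDivisionMap ℋ π ε act φR)
    (φL : P → P → G) (hφL : IsLeftDivisionMap 𝒢 π ε lact φL) :
    -- (a) invariance under the diagonal left 𝒢-action
    (∀ p₁ p₂ g, π p₁ = π p₂ → 𝒢.s g = π p₁ →
      φR (lact g p₁) (lact g p₂) = φR p₁ p₂) ∧
    -- (b) source and target of Φ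
    (∀ p₁ p₂, π p₁ = π p₂ →
      ℋ.t (φR p₁ p₂) = ε p₁ ∧ ℋ.s (φR p₁ p₂) = ε p₂) ∧
    -- (c) left and right ℋ-equivariance
    (∀ p₁ p₂ h, π p₁ = π p₂ → ℋ.s h = ε p₁ →
      φR (act p₁ (ℋ.inv h)) p₂ = ℋ.mul h (φR p₁ p₂)) ∧
    (∀ p₁ p₂ h, π p₁ = π p₂ → ℋ.t h = ε p₂ →
      φR p₁ (act p₂ h) = ℋ.mul (φR p₁ p₂) h) ∧
    -- (d) surjectivity onto the arrows of ℋ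
    (∀ h : H, ∃ p₁ p₂ : P, π p₁ = π p₂ ∧ φR p₁ p₂ = h) ∧
    -- (e) injectivity up to the diagonal 𝒢-action
    (∀ p₁ p₂ q₁ q₂ : P, π p₁ = π p₂ → π q₁ = π q₂ →
      φR p₁ p₂ = φR q₁ q₂ →
      ∃ g : G, 𝒢.s g = π p₁ ∧ q₁ = lact g p₁ ∧ q₂ = lact g p₂) := by

  obtain ⟨GM, εsurj, lfree, ltrans⟩ := hM
  obtain ⟨B, πlact, lunit, lmul, εlact, compat⟩ := GM
  -- right cancellation on fibers
  have rcancel : ∀ p (a b : H), ℋ.t a = ε p → ℋ.t b = ε p → act p a = act p b → a = b := by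
    intro p a b ha hb hab
    have h1 : ℋ.s a = ℋ.s b := by
      rw [← B.ε_act p a ha, ← B.ε_act p b hb, hab]
    have h2 : act p (ℋ.mul a (ℋ.inv b)) = p := by
      rw [← B.act_mul p a (ℋ.inv b) ha (by rw [ℋ.t_inv]; exact h1), hab,
        B.act_mul p b (ℋ.inv b) hb (ℋ.t_inv b).symm, ℋ.mul_inv, hb, B.act_unit]
    have h3 := B.free p _ (by
      rw [ℋ.t_mul a (ℋ.inv b) (by rw [ℋ.t_inv]; exact h1)]; exact ha) h2
    calc a = ℋ.mul a (ℋ.ι (ℋ.s a)) := (ℋ.mul_unit a).symm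
      _ = ℋ.mul a (ℋ.mul (ℋ.inv b) b) := by rw [ℋ.inv_mul, h1]
      _ = ℋ.mul (ℋ.mul a (ℋ.inv b)) b := (ℋ.mul_assoc a (ℋ.inv b) b
            (by rw [ℋ.t_inv]; exact h1) (ℋ.s_inv b)).symm
      _ = ℋ.mul (ℋ.ι (ε p)) b := by rw [h3]
      _ = b := by rw [← hb, ℋ.unit_mul]
  -- uniqueness of division
  have uniq : ∀ p q (h : H), π p = π q → ℋ.t h = ε p → act p h = q → φR p q = h := by
    intro p q h hpq ht hact
    exact rcancel p _ h (hφR p q hpq).1 ht (by rw [(hφR p q hpq).2, hact])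
  -- (b)
  have partB : ∀ p₁ p₂, π p₁ = π p₂ →
      ℋ.t (φR p₁ p₂) = ε p₁ ∧ ℋ.s (φR p₁ p₂) = ε p₂ := by
    intro p₁ p₂ hpq
    obtain ⟨ht, hact⟩ := hφR p₁ p₂ hpq
    refine ⟨ht, ?_⟩
    rw [← B.ε_act p₁ _ ht, hact]
  -- (a)
  have partA : ∀ p₁ p₂ g, π p₁ = π p₂ → 𝒢.s g = π p₁ →
      φR (lact g p₁) (lact g p₂) = φR p₁ p₂ := by
    intro p₁ p₂ g hpq hg
    obtain ⟨ht, hact⟩ := hφR p₁ p₂ hpq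
    refine uniq _ _ _ ?_ ?_ ?_
    · rw [πlact g p₁ hg, πlact g p₂ (hg.trans hpq)]
    · rw [εlact g p₁ hg]; exact ht
    · rw [compat g p₁ _ hg ht, hact]
  refine ⟨partA, partB, ?_, ?_, ?_, ?_⟩
  -- (c1)
  · intro p₁ p₂ h hpq hh
    obtain ⟨ht, hact⟩ := hφR p₁ p₂ hpq
    have htinv : ℋ.t (ℋ.inv h) = ε p₁ := by rw [ℋ.t_inv]; exact hh
    have hsφ : ℋ.s h = ℋ.t (φR p₁ p₂) := hh.trans ht.symm
    refine uniq _ _ _ ?_ ?_ ?_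
    · rw [B.π_act p₁ _ htinv]; exact hpq
    · rw [ℋ.t_mul h _ hsφ, ← ℋ.s_inv h, B.ε_act p₁ _ htinv]
    · rw [B.act_mul p₁ (ℋ.inv h) _ htinv (by rw [ℋ.s_inv, ℋ.t_mul h _ hsφ]),
        ← ℋ.mul_assoc (ℋ.inv h) h _ (ℋ.s_inv h) hsφ, ℋ.inv_mul, hh, ← ht,
        ℋ.unit_mul, hact]
  -- (c2)
  · intro p₁ p₂ h hpq hh
    obtain ⟨ht, hact⟩ := hφR p₁ p₂ hpq
    have hsφ : ℋ.s (φR p₁ p₂) = ℋ.t h := (partB p₁ p₂ hpq).2.trans hh.symm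
    refine uniq _ _ _ ?_ ?_ ?_
    · rw [B.π_act p₂ h hh]; exact hpq
    · rw [ℋ.t_mul _ h hsφ]; exact ht
    · rw [← B.act_mul p₁ _ h ht hsφ, hact]
  -- (d)
  · intro h
    obtain ⟨p, hp⟩ := εsurj (ℋ.t h)
    have ht : ℋ.t h = ε p := hp.symm
    exact ⟨p, act p h, (B.π_act p h ht).symm, uniq p (act p h) h (B.π_act p h ht).symm ht rfl⟩
  -- (e)
  · intro p₁ p₂ q₁ q₂ hp hq heq
    have hε : ε q₁ = ε p₁ := by
      rw [← (partB p₁ p₂ hp).1, ← (partB q₁ q₂ hq).1, heq]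
    obtain ⟨g, hg, hgp⟩ := ltrans q₁ p₁ hε
    refine ⟨g, hg, hgp.symm, ?_⟩
    have hπ : π q₁ = π (lact g p₂) := by
      rw [← hgp, πlact g p₁ hg, πlact g p₂ (hg.trans hp)]
    have : φR q₁ (lact g p₂) = φR q₁ q₂ := by
      rw [← heq, ← hgp, partA p₁ p₂ g hp hg]
    calc q₂ = act q₁ (φR q₁ q₂) := (hφR q₁ q₂ hq).2.symm
      _ = act q₁ (φR q₁ (lact g p₂)) := by rw [this]
      _ = lact g p₂ := (hφR q₁ _ hπ).2
end
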